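/- In the setting of the high-order entropy conservative scheme (m ∈ ℕ, p ≥ 1, coefficients α_1, …, α_p, Δξ_k > 0; η differentiable with V := ∇η and φ := V·U − η; B_j, ψ_j : ℝ^m → ℝ; Φ differentiable with w·∇Φ(w) = Φ(w); two-point EC fluxes F̃_k; grid data J_i, U_i differentiable in time, metric data N_k satisfying the discrete surface conservation laws Σ_k (1/Δξ_k)δ_k[N_{k,j}] = 0), suppose additionally that at each time and each interface (i,k,+1/2) one is given a real number λ̂_{i,k,+1/2} ≥ 0, an orthogonal m×m real matrix T_{i,k,+1/2}, an m×m real matrix R_{i,k,+1/2}, and a vector w_{i,k,+1/2} ∈ ℝ^m. Set Ṽ^{(i,k)}_j := R_{i,k,+1/2}ᵀ T_{i,k,+1/2} V(U_j) for grid indices j, and let Y_{i,k,+1/2} be the diagonal m×m matrix whose l-th diagonal entry is 1 if sign((w_{i,k,+1/2})_l) = sign((Ṽ^{(i,k)}_{i+e_k} − Ṽ^{(i,k)}_i)_l) and 0 otherwise. Suppose the scheme is d/dt (J_i U_i) = −Σ_{k=1}^3 (1/Δξ_k)(F̂_{i,k,+1/2} − F̂_{i,k,−1/2}) − ∇Φ(V(U_i))·Σ_{k=1}^3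 (1/Δξ_k)((B̃_k)^{2p}_{i,k,+1/2} − (B̃_k)^{2p}_{i,k,−1/2}), with entropy stable flux F̂_{i,k,+1/2} := (F̃_k)^{2p}_{i,k,+1/2} − (1/2)·λ̂_{i,k,+1/2}·T_{i,k,+1/2}⁻¹ R_{i,k,+1/2} Y_{i,k,+1/2} w_{i,k,+1/2}, and d/dt J_i = −Σ_{k=1}^3 (1/Δξ_k)·δ_k[N_{k,t}]_i. Then the semi-discrete entropy inequality holds: for all i ∈ ℤ³ and all times, d/dt (J_i·η(U_i)) + Σ_{k=1}^3 (1/Δξ_k)·(q̂_{i,k,+1/2} − q̂_{i,k,−1/2}) ≤ 0, where q̂_{i,k,+1/2} := (q̃_k)^{2p}_{i,k,+1/2} − (1/4)·λ̂_{i,k,+1/2}·(Ṽ^{(i,k)}_i + Ṽ^{(i,k)}_{i+e_k})·(Y_{i,k,+1/2} w_{i,k,+1/2}); that is, the scheme is entropy stable. -/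
import Mathlib


open Matrix

/-- The `k`-th standard basis vector of `ℤ³`. -/
def gridE (k : Fin 3) : Fin 3 → ℤ := fun l => if l = k then 1 else 0

/-- The central difference operator with combination coefficients `α` in direction `k`:
`δ_k[a]_i = (1/2) Σ_{n=1}^p α_n (a_{i+n e_k} − a_{i−n e_k})`. -/
noncomputable def gridCDiff (p : ℕ) (α : ℕ → ℝ) (k : Fin 3)
    (a : (Fin 3 → ℤ) → ℝ) (i : Fin 3 → ℤ) : ℝ :=
  (1 / 2) * ∑ n ∈ Finset.Icc 1 p,
    α n * (a (i + (n : ℤ) • gridE k) - a (i - (n : ℤ) • gridE k))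

/-- The `2p`-th order combination flux of a two-point flux `G` at interface
`(i, k, +1/2)`. -/
noncomputable def combFlux {m : ℕ} {X : Type} [AddCommMonoid X] [Module ℝ X]
    (p : ℕ) (α : ℕ → ℝ)
    (G : (Fin m → ℝ) → (Fin m → ℝ) → (ℝ × (Fin 3 → ℝ)) → (ℝ × (Fin 3 → ℝ)) → X)
    (Ug : (Fin 3 → ℤ) → (Fin m → ℝ)) (Ng : (Fin 3 → ℤ) → ℝ × (Fin 3 → ℝ))
    (i : Fin 3 → ℤ) (k : Fin 3) : X :=
  ∑ n ∈ Finset.Icc 1 p, α n •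
    ∑ s ∈ Finset.range n,
      G (Ug (i - (s : ℤ) • gridE k)) (Ug (i + ((n : ℤ) - (s : ℤ)) • gridE k))
        (Ng (i - (s : ℤ) • gridE k)) (Ng (i + ((n : ℤ) - (s : ℤ)) • gridE k))

/-- The two-point source flux
`B̃(U_l,U_r,n_l,n_r) = Σ_j (1/4)(n_{j,l}+n_{j,r})(B_j(U_l)+B_j(U_r))`. -/
noncomputable def sourceFlux {m : ℕ} (B : Fin 3 → (Fin m → ℝ) → ℝ) :
    (Fin m → ℝ) → (Fin m → ℝ) → (ℝ × (Fin 3 → ℝ)) → (ℝ × (Fin 3 → ℝ)) → ℝ :=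
  fun Ul Ur nl nr => ∑ j : Fin 3, (1 / 4) * (nl.2 j + nr.2 j) * (B j Ul + B j Ur)

/-- The two-point numerical entropy flux associated with a two-point flux `F`. -/
noncomputable def entropyFlux {m : ℕ}
    (V : (Fin m → ℝ) → Fin m → ℝ) (φ Φ : (Fin m → ℝ) → ℝ)
    (ψ B : Fin 3 → (Fin m → ℝ) → ℝ)
    (F : (Fin m → ℝ) → (Fin m → ℝ) → (ℝ × (Fin 3 → ℝ)) → (ℝ × (Fin 3 → ℝ)) → Fin m → ℝ) :
    (Fin m → ℝ) → (Fin m → ℝ) → (ℝ × (Fin 3 → ℝ)) → (ℝ × (Fin 3 → ℝ)) → ℝ :=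
  fun Ul Ur nl nr =>
    (1 / 2) * ((V Ul + V Ur) ⬝ᵥ F Ul Ur nl nr)
      - (1 / 4) * (nl.1 + nr.1) * (φ Ul + φ Ur)
      - ∑ j : Fin 3, (1 / 4) * (nl.2 j + nr.2 j) * (ψ j Ul + ψ j Ur)
      + ∑ j : Fin 3,
          (1 / 8) * (nl.2 j + nr.2 j) * (B j Ul + B j Ur) * (Φ (V Ul) + Φ (V Ur))

section AuxEntropyStable

lemma dot_sum' {m : ℕ} {ι : Type*} (v : Fin m → ℝ) (s : Finset ι) (f : ι → Fin m → ℝ) :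
    v ⬝ᵥ (∑ i ∈ s, f i) = ∑ i ∈ s, v ⬝ᵥ f i := by
  unfold dotProduct
  simp only [Finset.sum_apply, Finset.mul_sum]
  rw [Finset.sum_comm]

lemma combFlux_telescope {m : ℕ} {X : Type} [AddCommGroup X] [Module ℝ X]
    (p : ℕ) (α : ℕ → ℝ)
    (G : (Fin m → ℝ) → (Fin m → ℝ) → (ℝ × (Fin 3 → ℝ)) → (ℝ × (Fin 3 → ℝ)) → X)
    (Ug : (Fin 3 → ℤ) → (Fin m → ℝ)) (Ng : (Fin 3 → ℤ) → ℝ × (Fin 3 → ℝ))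
    (i : Fin 3 → ℤ) (k : Fin 3) :
    combFlux p α G Ug Ng i k - combFlux p α G Ug Ng (i - gridE k) k
      = ∑ n ∈ Finset.Icc 1 p, α n •
          (G (Ug i) (Ug (i + (n : ℤ) • gridE k)) (Ng i) (Ng (i + (n : ℤ) • gridE k))
            - G (Ug (i - (n : ℤ) • gridE k)) (Ug i) (Ng (i - (n : ℤ) • gridE k)) (Ng i)) := by
  unfold combFlux
  rw [← Finset.sum_sub_distrib]
  refine Finset.sum_congr rfl fun n _ => ?_
  rw [← smul_sub]
  congr 1
  set f : ℕ → X := fun s =>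
    G (Ug (i - (s : ℤ) • gridE k)) (Ug (i + ((n : ℤ) - (s : ℤ)) • gridE k))
      (Ng (i - (s : ℤ) • gridE k)) (Ng (i + ((n : ℤ) - (s : ℤ)) • gridE k)) with hf
  have h1 : ∀ s : ℕ, i - gridE k - (s : ℤ) • gridE k = i - ((s : ℤ) + 1) • gridE k := by
    intro s; funext l
    simp only [Pi.sub_apply, Pi.add_apply, Pi.smul_apply, smul_eq_mul]
    ring
  have h2 : ∀ s : ℕ, i - gridE k + ((n : ℤ) - (s : ℤ)) • gridE k
      = i + ((n : ℤ) - ((s : ℤ) + 1)) • gridE k := by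
    intro s; funext l
    simp only [Pi.sub_apply, Pi.add_apply, Pi.smul_apply, smul_eq_mul]
    ring
  have hsecond : (∑ s ∈ Finset.range n,
      G (Ug (i - gridE k - (s : ℤ) • gridE k))
        (Ug (i - gridE k + ((n : ℤ) - (s : ℤ)) • gridE k))
        (Ng (i - gridE k - (s : ℤ) • gridE k))
        (Ng (i - gridE k + ((n : ℤ) - (s : ℤ)) • gridE k)))
      = ∑ s ∈ Finset.range n, f (s + 1) := by
    refine Finset.sum_congr rfl fun s _ => ?_
    rw [h1 s, h2 s]
    have hc : ((s + 1 : ℕ) : ℤ) = (s : ℤ) + 1 := by push_cast; ring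
    simp only [hf, hc]
  rw [hsecond, ← Finset.sum_sub_distrib, Finset.sum_range_sub' f n]
  simp only [hf, Nat.cast_zero, zero_smul, sub_zero, add_zero, sub_self]

lemma twoPoint_L {m : ℕ}
    (V : (Fin m → ℝ) → Fin m → ℝ) (φ Φ : (Fin m → ℝ) → ℝ)
    (ψ B : Fin 3 → (Fin m → ℝ) → ℝ)
    (F : (Fin m → ℝ) → (Fin m → ℝ) → (ℝ × (Fin 3 → ℝ)) → (ℝ × (Fin 3 → ℝ)) → Fin m → ℝ)
    (Ul Ur : Fin m → ℝ) (nl nr : ℝ × (Fin 3 → ℝ))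
    (h : (V Ur - V Ul) ⬝ᵥ F Ul Ur nl nr =
        (1 / 2) * (nl.1 + nr.1) * (φ Ur - φ Ul)
          + ∑ j : Fin 3, (1 / 2) * (nl.2 j + nr.2 j) * (ψ j Ur - ψ j Ul)
          - ∑ j : Fin 3,
              (1 / 4) * (nl.2 j + nr.2 j) * (B j Ul + B j Ur) * (Φ (V Ur) - Φ (V Ul))) :
    V Ul ⬝ᵥ F Ul Ur nl nr =
      entropyFlux V φ Φ ψ B F Ul Ur nl nr
        + (1 / 2) * (nl.1 + nr.1) * φ Ul
        + (∑ j : Fin 3, (1 / 2) * (nl.2 j + nr.2 j) * ψ j Ul)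
        - Φ (V Ul) * sourceFlux B Ul Ur nl nr := by
  rw [sub_dotProduct] at h
  unfold entropyFlux sourceFlux
  rw [add_dotProduct]
  simp only [Fin.sum_univ_three] at h ⊢
  linear_combination (-1/2 : ℝ) * h

lemma twoPoint_R {m : ℕ}
    (V : (Fin m → ℝ) → Fin m → ℝ) (φ Φ : (Fin m → ℝ) → ℝ)
    (ψ B : Fin 3 → (Fin m → ℝ) → ℝ)
    (F : (Fin m → ℝ) → (Fin m → ℝ) → (ℝ × (Fin 3 → ℝ)) → (ℝ × (Fin 3 → ℝ)) → Fin m → ℝ)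
    (Ul Ur : Fin m → ℝ) (nl nr : ℝ × (Fin 3 → ℝ))
    (h : (V Ur - V Ul) ⬝ᵥ F Ul Ur nl nr =
        (1 / 2) * (nl.1 + nr.1) * (φ Ur - φ Ul)
          + ∑ j : Fin 3, (1 / 2) * (nl.2 j + nr.2 j) * (ψ j Ur - ψ j Ul)
          - ∑ j : Fin 3,
              (1 / 4) * (nl.2 j + nr.2 j) * (B j Ul + B j Ur) * (Φ (V Ur) - Φ (V Ul))) :
    V Ur ⬝ᵥ F Ul Ur nl nr =
      entropyFlux V φ Φ ψ B F Ul Ur nl nr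
        + (1 / 2) * (nl.1 + nr.1) * φ Ur
        + (∑ j : Fin 3, (1 / 2) * (nl.2 j + nr.2 j) * ψ j Ur)
        - Φ (V Ur) * sourceFlux B Ul Ur nl nr := by
  rw [sub_dotProduct] at h
  unfold entropyFlux sourceFlux
  rw [add_dotProduct]
  simp only [Fin.sum_univ_three] at h ⊢
  linear_combination (1/2 : ℝ) * h

lemma local_identity {m : ℕ} (p : ℕ) (α : ℕ → ℝ)
    (V : (Fin m → ℝ) → Fin m → ℝ) (φ Φ : (Fin m → ℝ) → ℝ)
    (ψ B : Fin 3 → (Fin m → ℝ) → ℝ)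
    (F : (Fin m → ℝ) → (Fin m → ℝ) → (ℝ × (Fin 3 → ℝ)) → (ℝ × (Fin 3 → ℝ)) → Fin m → ℝ)
    (hEC : ∀ (Ul Ur : Fin m → ℝ) (nl nr : ℝ × (Fin 3 → ℝ)),
      (V Ur - V Ul) ⬝ᵥ F Ul Ur nl nr =
        (1 / 2) * (nl.1 + nr.1) * (φ Ur - φ Ul)
          + ∑ j : Fin 3, (1 / 2) * (nl.2 j + nr.2 j) * (ψ j Ur - ψ j Ul)
          - ∑ j : Fin 3,
              (1 / 4) * (nl.2 j + nr.2 j) * (B j Ul + B j Ur) * (Φ (V Ur) - Φ (V Ul)))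
    (Ug : (Fin 3 → ℤ) → (Fin m → ℝ)) (Ng : (Fin 3 → ℤ) → ℝ × (Fin 3 → ℝ))
    (i : Fin 3 → ℤ) (k : Fin 3) :
    V (Ug i) ⬝ᵥ (combFlux p α F Ug Ng i k - combFlux p α F Ug Ng (i - gridE k) k)
      = (combFlux p α (entropyFlux V φ Φ ψ B F) Ug Ng i k
          - combFlux p α (entropyFlux V φ Φ ψ B F) Ug Ng (i - gridE k) k)
        + φ (Ug i) * gridCDiff p α k (fun z => (Ng z).1) i
        + (∑ j : Fin 3, ψ j (Ug i) * gridCDiff p α k (fun z => (Ng z).2 j) i)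
        - Φ (V (Ug i)) *
            (combFlux p α (sourceFlux B) Ug Ng i k
              - combFlux p α (sourceFlux B) Ug Ng (i - gridE k) k) := by
  rw [combFlux_telescope, combFlux_telescope p α (entropyFlux V φ Φ ψ B F),
    combFlux_telescope p α (sourceFlux B), dot_sum']
  unfold gridCDiff
  simp only [smul_eq_mul, Fin.sum_univ_three]
  simp only [Finset.mul_sum, ← Finset.sum_add_distrib, ← Finset.sum_sub_distrib]
  refine Finset.sum_congr rfl fun n _ => ?_
  have hL := twoPoint_L V φ Φ ψ B F (Ug i) (Ug (i + (n : ℤ) • gridE k))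
    (Ng i) (Ng (i + (n : ℤ) • gridE k)) (hEC _ _ _ _)
  have hR := twoPoint_R V φ Φ ψ B F (Ug (i - (n : ℤ) • gridE k)) (Ug i)
    (Ng (i - (n : ℤ) • gridE k)) (Ng i) (hEC _ _ _ _)
  rw [dotProduct_smul, smul_eq_mul, dotProduct_sub]
  simp only [Fin.sum_univ_three] at hL hR
  linear_combination (α n) * hL - (α n) * hR

lemma sign_mul_nonneg' (a b : ℝ) (h : Real.sign a = Real.sign b) : 0 ≤ a * b := by
  rcases lt_trichotomy a 0 with ha|ha|ha <;> rcases lt_trichotomy b 0 with hb|hb|hb <;>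
    simp_all [Real.sign_of_neg, Real.sign_of_pos] <;> nlinarith

lemma sign_sel_nonneg {m : ℕ} (Δ w : Fin m → ℝ) :
    0 ≤ Δ ⬝ᵥ (Matrix.diagonal
      (fun l => if Real.sign (w l) = Real.sign (Δ l) then (1 : ℝ) else 0) *ᵥ w) := by
  unfold dotProduct
  refine Finset.sum_nonneg fun l _ => ?_
  rw [Matrix.mulVec_diagonal]
  by_cases h : Real.sign (w l) = Real.sign (Δ l)
  · rw [if_pos h, one_mul]
    exact sign_mul_nonneg' _ _ h.symm
  · rw [if_neg h, zero_mul, mul_zero]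

lemma dot_inv_mul {m : ℕ} (T R : Matrix (Fin m) (Fin m) ℝ) (hT : Tᵀ * T = 1)
    (v x : Fin m → ℝ) :
    v ⬝ᵥ ((T⁻¹ * R) *ᵥ x) = (Rᵀ *ᵥ (T *ᵥ v)) ⬝ᵥ x := by
  rw [Matrix.inv_eq_left_inv hT, ← Matrix.mulVec_mulVec, Matrix.dotProduct_mulVec v,
    Matrix.vecMul_transpose, Matrix.dotProduct_mulVec, Matrix.mulVec_transpose]

lemma deriv_J_eta {m : ℕ} (η : (Fin m → ℝ) → ℝ) (V : (Fin m → ℝ) → Fin m → ℝ)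
    (hη : Differentiable ℝ η)
    (hV : ∀ (u : Fin m → ℝ) (y : Fin m → ℝ), fderiv ℝ η u y = V u ⬝ᵥ y)
    (φ : (Fin m → ℝ) → ℝ) (hφ : ∀ u, φ u = V u ⬝ᵥ u - η u)
    (J : ℝ → ℝ) (U : ℝ → Fin m → ℝ)
    (hJ : Differentiable ℝ J) (hU : Differentiable ℝ U) (t : ℝ) :
    deriv (fun τ => J τ * η (U τ)) t
      = V (U t) ⬝ᵥ deriv (fun τ => J τ • U τ) t - φ (U t) * deriv J t := by
  have hU' : HasDerivAt U (deriv U t) t := (hU t).hasDerivAt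
  have hη' : HasDerivAt (fun τ => η (U τ)) (V (U t) ⬝ᵥ deriv U t) t := by
    have h := (hη (U t)).hasFDerivAt.comp_hasDerivAt t hU'
    rwa [hV] at h
  have h1 : deriv (fun τ => J τ * η (U τ)) t
      = deriv J t * η (U t) + J t * (V (U t) ⬝ᵥ deriv U t) :=
    ((hJ t).hasDerivAt.mul hη').deriv
  have h2 : deriv (fun τ => J τ • U τ) t = J t • deriv U t + deriv J t • U t :=
    ((hJ t).hasDerivAt.smul hU').deriv
  rw [h1, h2, dotProduct_add, dotProduct_smul, dotProduct_smul, hφ]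
  simp only [smul_eq_mul]
  ring

end AuxEntropyStable

/-- the high-order semi-discrete scheme obtained from the entropy
conservative fluxes by adding the sign-property dissipation term
`−(1/2) λ̂ T⁻¹ R Y w` (with `λ̂ ≥ 0`, `T` orthogonal, `Y` the diagonal sign-switch matrix)
satisfies the semi-discrete entropy inequality, i.e. it is entropy stable. -/
theorem high_order_semidiscrete_entropy_inequality
    (m p : ℕ) (hp : 1 ≤ p) (α : ℕ → ℝ)
    (Δξ : Fin 3 → ℝ) (hΔξ : ∀ k, 0 < Δξ k)
    (η : (Fin m → ℝ) → ℝ) (V : (Fin m → ℝ) → Fin m → ℝ)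
    (hη : Differentiable ℝ η)
    (hV : ∀ (u : Fin m → ℝ) (y : Fin m → ℝ), fderiv ℝ η u y = V u ⬝ᵥ y)
    (φ : (Fin m → ℝ) → ℝ)
    (hφ : ∀ u, φ u = V u ⬝ᵥ u - η u)
    (B ψ : Fin 3 → (Fin m → ℝ) → ℝ)
    (Φ : (Fin m → ℝ) → ℝ) (gΦ : (Fin m → ℝ) → Fin m → ℝ)
    (hΦ : Differentiable ℝ Φ)
    (hgΦ : ∀ (w y : Fin m → ℝ), fderiv ℝ Φ w y = gΦ w ⬝ᵥ y)
    (hEuler : ∀ w : Fin m → ℝ, w ⬝ᵥ gΦ w = Φ w)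
    (Ftil : Fin 3 → (Fin m → ℝ) → (Fin m → ℝ) →
      (ℝ × (Fin 3 → ℝ)) → (ℝ × (Fin 3 → ℝ)) → Fin m → ℝ)
    (hEC : ∀ (k : Fin 3) (Ul Ur : Fin m → ℝ) (nl nr : ℝ × (Fin 3 → ℝ)),
      (V Ur - V Ul) ⬝ᵥ Ftil k Ul Ur nl nr =
        (1 / 2) * (nl.1 + nr.1) * (φ Ur - φ Ul)
          + ∑ j : Fin 3, (1 / 2) * (nl.2 j + nr.2 j) * (ψ j Ur - ψ j Ul)
          - ∑ j : Fin 3,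
              (1 / 4) * (nl.2 j + nr.2 j) * (B j Ul + B j Ur) * (Φ (V Ur) - Φ (V Ul)))
    (J : (Fin 3 → ℤ) → ℝ → ℝ) (U : (Fin 3 → ℤ) → ℝ → Fin m → ℝ)
    (hJ : ∀ i, Differentiable ℝ (J i))
    (hU : ∀ i, Differentiable ℝ (U i))
    (N : Fin 3 → (Fin 3 → ℤ) → ℝ → ℝ × (Fin 3 → ℝ))
    (hSCL : ∀ (t : ℝ) (j : Fin 3) (i : Fin 3 → ℤ),
      ∑ k : Fin 3, (1 / Δξ k) * gridCDiff p α k (fun w => (N k w t).2 j) i = 0)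
    -- interface dissipation data
    (lam : ℝ → (Fin 3 → ℤ) → Fin 3 → ℝ)
    (hlam : ∀ t i k, 0 ≤ lam t i k)
    (T R : ℝ → (Fin 3 → ℤ) → Fin 3 → Matrix (Fin m) (Fin m) ℝ)
    (hT : ∀ t i k, (T t i k)ᵀ * T t i k = 1)
    (w : ℝ → (Fin 3 → ℤ) → Fin 3 → Fin m → ℝ)
    -- the scaled entropy variables `Ṽ^{(i,k)}_j = Rᵀ T V(U_j)`
    (Vt : ℝ → (Fin 3 → ℤ) → Fin 3 → (Fin 3 → ℤ) → Fin m → ℝ)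
    (hVt : ∀ t i k j, Vt t i k j = (R t i k)ᵀ *ᵥ (T t i k *ᵥ V (U j t)))
    -- the diagonal sign-switch matrix `Y`
    (Y : ℝ → (Fin 3 → ℤ) → Fin 3 → Matrix (Fin m) (Fin m) ℝ)
    (hY : ∀ t i k, Y t i k = Matrix.diagonal (fun l =>
      if Real.sign (w t i k l)
          = Real.sign ((Vt t i k (i + gridE k) - Vt t i k i) l) then (1 : ℝ) else 0))
    -- the entropy stable flux `F̂`
    (Fhat : ℝ → (Fin 3 → ℤ) → Fin 3 → Fin m → ℝ)
    (hFhat : ∀ t i k, Fhat t i k =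
      combFlux p α (Ftil k) (fun z => U z t) (fun z => N k z t) i k
        - ((1 / 2) * lam t i k) • (((T t i k)⁻¹ * R t i k) *ᵥ (Y t i k *ᵥ w t i k)))
    (hScheme : ∀ (i : Fin 3 → ℤ) (t : ℝ),
      deriv (fun τ => J i τ • U i τ) t =
        -(∑ k : Fin 3, (1 / Δξ k) • (Fhat t i k - Fhat t (i - gridE k) k))
          - (∑ k : Fin 3, (1 / Δξ k) *
              (combFlux p α (sourceFlux B) (fun z => U z t) (fun z => N k z t) i k
                - combFlux p α (sourceFlux B) (fun z => U z t) (fun z => N k z t)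
                    (i - gridE k) k)) • gΦ (V (U i t)))
    (hVCL : ∀ (i : Fin 3 → ℤ) (t : ℝ),
      deriv (J i) t =
        -∑ k : Fin 3, (1 / Δξ k) * gridCDiff p α k (fun z => (N k z t).1) i)
    -- the entropy stable numerical entropy flux `q̂`
    (qhat : ℝ → (Fin 3 → ℤ) → Fin 3 → ℝ)
    (hqhat : ∀ t i k, qhat t i k =
      combFlux p α (entropyFlux V φ Φ ψ B (Ftil k)) (fun z => U z t) (fun z => N k z t) i k
        - (1 / 4) * lam t i k *
            ((Vt t i k i + Vt t i k (i + gridE k)) ⬝ᵥ (Y t i k *ᵥ w t i k))) :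
    ∀ (i : Fin 3 → ℤ) (t : ℝ),
      deriv (fun τ => J i τ * η (U i τ)) t
        + ∑ k : Fin 3, (1 / Δξ k) * (qhat t i k - qhat t (i - gridE k) k) ≤ 0 := by
  
  intro i t
  have hD := deriv_J_eta η V hη hV φ hφ (J i) (U i) (hJ i) (hU i) t
  rw [hScheme i t, hVCL i t] at hD
  rw [dotProduct_sub, dotProduct_neg, dot_sum'] at hD
  simp only [dotProduct_smul, smul_eq_mul, hEuler] at hD
  have hidx : ∀ k : Fin 3, i - gridE k + gridE k = i := fun k => by abel
  have hFh : ∀ k : Fin 3, V (U i t) ⬝ᵥ (Fhat t i k - Fhat t (i - gridE k) k)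
      = ((combFlux p α (entropyFlux V φ Φ ψ B (Ftil k)) (fun z => U z t) (fun z => N k z t) i k
            - combFlux p α (entropyFlux V φ Φ ψ B (Ftil k)) (fun z => U z t) (fun z => N k z t)
                (i - gridE k) k)
          + φ (U i t) * gridCDiff p α k (fun z => (N k z t).1) i
          + (∑ j : Fin 3, ψ j (U i t) * gridCDiff p α k (fun z => (N k z t).2 j) i)
          - Φ (V (U i t)) *
              (combFlux p α (sourceFlux B) (fun z => U z t) (fun z => N k z t) i k
                - combFlux p α (sourceFlux B) (fun z => U z t) (fun z => N k z t) (i - gridE k) k))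
        - (1 / 2) * lam t i k * (Vt t i k i ⬝ᵥ (Y t i k *ᵥ w t i k))
        + (1 / 2) * lam t (i - gridE k) k *
            (Vt t (i - gridE k) k i ⬝ᵥ (Y t (i - gridE k) k *ᵥ w t (i - gridE k) k)) := by
    intro k
    rw [hFhat t i k, hFhat t (i - gridE k) k, sub_sub_sub_comm, dotProduct_sub,
      local_identity p α V φ Φ ψ B (Ftil k) (hEC k) (fun z => U z t) (fun z => N k z t) i k,
      dotProduct_sub, dotProduct_smul, dotProduct_smul, dot_inv_mul _ _ (hT t i k),
      dot_inv_mul _ _ (hT t (i - gridE k) k), ← hVt t i k i, ← hVt t (i - gridE k) k i]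
    simp only [smul_eq_mul]
    ring
  have hQ : ∀ k : Fin 3, qhat t i k - qhat t (i - gridE k) k
      = (combFlux p α (entropyFlux V φ Φ ψ B (Ftil k)) (fun z => U z t) (fun z => N k z t) i k
            - combFlux p α (entropyFlux V φ Φ ψ B (Ftil k)) (fun z => U z t) (fun z => N k z t)
                (i - gridE k) k)
        - (1 / 4) * lam t i k *
            ((Vt t i k i + Vt t i k (i + gridE k)) ⬝ᵥ (Y t i k *ᵥ w t i k))
        + (1 / 4) * lam t (i - gridE k) k *
            ((Vt t (i - gridE k) k (i - gridE k) + Vt t (i - gridE k) k (i - gridE k + gridE k))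
              ⬝ᵥ (Y t (i - gridE k) k *ᵥ w t (i - gridE k) k)) := by
    intro k
    rw [hqhat t i k, hqhat t (i - gridE k) k]
    ring
  have hmain : deriv (fun τ => J i τ * η (U i τ)) t
        + ∑ k : Fin 3, 1 / Δξ k * (qhat t i k - qhat t (i - gridE k) k)
      = ∑ k : Fin 3, 1 / Δξ k *
          (-(1 / 4) * (lam t i k *
              ((Vt t i k (i + gridE k) - Vt t i k i) ⬝ᵥ (Y t i k *ᵥ w t i k)))
            - (1 / 4) * (lam t (i - gridE k) k *
              ((Vt t (i - gridE k) k i - Vt t (i - gridE k) k (i - gridE k))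
                ⬝ᵥ (Y t (i - gridE k) k *ᵥ w t (i - gridE k) k)))) := by
    rw [hD]
    simp only [hQ, hFh, hidx]
    simp only [sub_dotProduct, add_dotProduct]
    have hS0 := hSCL t 0 i
    have hS1 := hSCL t 1 i
    have hS2 := hSCL t 2 i
    simp only [Fin.sum_univ_three] at hS0 hS1 hS2 ⊢
    linear_combination (-(ψ 0 (U i t))) * hS0 + (-(ψ 1 (U i t))) * hS1 + (-(ψ 2 (U i t))) * hS2
  rw [hmain]
  refine Finset.sum_nonpos fun k _ => ?_
  have h1 : (0 : ℝ) ≤ 1 / Δξ k := le_of_lt (div_pos one_pos (hΔξ k))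
  have hSP : 0 ≤ lam t i k *
      ((Vt t i k (i + gridE k) - Vt t i k i) ⬝ᵥ (Y t i k *ᵥ w t i k)) := by
    refine mul_nonneg (hlam t i k) ?_
    rw [hY t i k]
    exact sign_sel_nonneg _ _
  have hSM : 0 ≤ lam t (i - gridE k) k *
      ((Vt t (i - gridE k) k i - Vt t (i - gridE k) k (i - gridE k))
        ⬝ᵥ (Y t (i - gridE k) k *ᵥ w t (i - gridE k) k)) := by
    refine mul_nonneg (hlam t (i - gridE k) k) ?_
    rw [hY t (i - gridE k) k, hidx k]
    exact sign_sel_nonneg _ _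
  have h2 : -(1 / 4 : ℝ) * (lam t i k *
        ((Vt t i k (i + gridE k) - Vt t i k i) ⬝ᵥ (Y t i k *ᵥ w t i k)))
      - (1 / 4) * (lam t (i - gridE k) k *
        ((Vt t (i - gridE k) k i - Vt t (i - gridE k) k (i - gridE k))
          ⬝ᵥ (Y t (i - gridE k) k *ᵥ w t (i - gridE k) k))) ≤ 0 := by
    nlinarith
  exact mul_nonpos_of_nonneg_of_nonpos h1 h2
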